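/- Let U ⊆ ℝ × ℝ³ be open and let ρ : U → ℝ and u : U → ℝ³ be twice continuously differentiable and satisfy the continuity equation ∂_t ρ + div(ρ u) = 0 at every point of U. Let p ∈ ℝ with 2 ≤ p ≤ 6 and let (t,x) ∈ U be a point at which the spatial gradient ∇ρ(t,x) ≠ 0. Then at (t,x): ∂_t(|∇ρ|^p) + div(|∇ρ|^p u) + (p−1) |∇ρ|^p div u + p |∇ρ|^{p−2} ∑_{i,j=1}^{3} ∂_i ρ · ∂_i u^j · ∂_j ρ + p ρ |∇ρ|^{p−2} ⟨∇ρ, ∇(div u)⟩ = 0. -/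

import Mathlib

noncomputable section

/-- ℝ³, realized as `Fin 3 → ℝ`. -/
abbrev V3 : Type := Fin 3 → ℝ

/-- Spatial partial derivative `∂ᵢ f (t, x)` of a time-dependent scalar field. -/
def spd (i : Fin 3) (f : ℝ × V3 → ℝ) (t : ℝ) (x : V3) : ℝ :=
  fderiv ℝ (fun y => f (t, y)) x (Pi.single i 1)

/-- Spatial gradient `∇f (t, x)` of a time-dependent scalar field. -/
def spgrad (f : ℝ × V3 → ℝ) (t : ℝ) (x : V3) : V3 := fun i => spd i f t x

/-- Spatial partial derivative `∂ᵢ v (t, x)` of a time-dependent vector field. -/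
def spdv (i : Fin 3) (v : ℝ × V3 → V3) (t : ℝ) (x : V3) : V3 :=
  fderiv ℝ (fun y => v (t, y)) x (Pi.single i 1)

/-- Spatial divergence `div v (t, x)` of a time-dependent vector field. -/
def spdiv (v : ℝ × V3 → V3) (t : ℝ) (x : V3) : ℝ := ∑ i, spdv i v t x i

/-- Spatial curl `curl v (t, x)` of a time-dependent vector field (0-based indices). -/
def spcurl (v : ℝ × V3 → V3) (t : ℝ) (x : V3) : V3 :=
  ![spdv 1 v t x 2 - spdv 2 v t x 1,
    spdv 2 v t x 0 - spdv 0 v t x 2,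
    spdv 0 v t x 1 - spdv 1 v t x 0]

/-- Time derivative `∂ₜ f (t, x)` of a time-dependent scalar field. -/
def pdt (f : ℝ × V3 → ℝ) (t : ℝ) (x : V3) : ℝ := deriv (fun s => f (s, x)) t

/-- Time derivative `∂ₜ v (t, x)` of a time-dependent vector field. -/
def pdtv (v : ℝ × V3 → V3) (t : ℝ) (x : V3) : V3 := deriv (fun s => v (s, x)) t

/-- Cross product in ℝ³. -/
def cross3 (a b : V3) : V3 :=
  ![a 1 * b 2 - a 2 * b 1, a 2 * b 0 - a 0 * b 2, a 0 * b 1 - a 1 * b 0]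


/-- Euclidean norm on ℝ³. -/
def norm3 (v : V3) : ℝ := Real.sqrt (∑ i, (v i) ^ 2)

/-! Differentiating the continuity equation in `xᵢ` and using the symmetry of second derivatives
gives the transport equation
`∂ₜ∂ᵢρ + ∂ᵢρ div u + ρ ∂ᵢ(div u) + ∑ⱼ ∂ⱼρ ∂ᵢuʲ + u · ∇∂ᵢρ = 0` for `∇ρ`.
Contracting it with `p |∇ρ|^{p-2} ∂ᵢρ` turns it, by the chain rule for `|∇ρ|^p` (valid where
`∇ρ ≠ 0`) and the Leibniz rule `div (f u) = f div u + u · ∇f`, into the stated identity. -/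

open Filter Topology

def spaceDir (i : Fin 3) : ℝ × V3 := (0, Pi.single i 1)

def timeDir : ℝ × V3 := (1, 0)

section PartialDerivatives

variable {f g : ℝ × V3 → ℝ} {v : ℝ × V3 → V3} {t : ℝ} {x : V3}

theorem HasFDerivAt.spd_eq {L : (ℝ × V3) →L[ℝ] ℝ} (hf : HasFDerivAt f L (t, x)) (i : Fin 3) :
    spd i f t x = L (spaceDir i) := by
  have h : HasFDerivAt (fun y => f (t, y)) (L.comp (.inr ℝ ℝ V3)) x :=
    hf.comp x (hasFDerivAt_prodMk_right t x)
  rw [spd, h.fderiv]; rfl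

theorem HasFDerivAt.pdt_eq {L : (ℝ × V3) →L[ℝ] ℝ} (hf : HasFDerivAt f L (t, x)) :
    pdt f t x = L timeDir := by
  have h : HasFDerivAt (fun s => f (s, x)) (L.comp (.inl ℝ ℝ V3)) t :=
    hf.comp t (hasFDerivAt_prodMk_left t x)
  rw [pdt, h.hasDerivAt.deriv]; rfl

theorem HasFDerivAt.spdv_eq {L : (ℝ × V3) →L[ℝ] V3} (hv : HasFDerivAt v L (t, x)) (i : Fin 3) :
    spdv i v t x = L (spaceDir i) := by
  have h : HasFDerivAt (fun y => v (t, y)) (L.comp (.inr ℝ ℝ V3)) x :=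
    hv.comp x (hasFDerivAt_prodMk_right t x)
  rw [spdv, h.fderiv]; rfl

theorem HasFDerivAt.spdiv_eq {L : (ℝ × V3) →L[ℝ] V3} (hv : HasFDerivAt v L (t, x)) :
    spdiv v t x = ∑ i, L (spaceDir i) i := by
  simp only [spdiv, hv.spdv_eq]

theorem spd_eq_fderiv (hf : DifferentiableAt ℝ f (t, x)) (i : Fin 3) :
    spd i f t x = fderiv ℝ f (t, x) (spaceDir i) :=
  hf.hasFDerivAt.spd_eq i

theorem spd_apply_eq_spdv (hv : DifferentiableAt ℝ v (t, x)) (i j : Fin 3) :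
    spd i (fun q => v q j) t x = spdv i v t x j := by
  rw [(hasFDerivAt_pi'.1 hv.hasFDerivAt j).spd_eq i, hv.hasFDerivAt.spdv_eq i]
  rfl

theorem spd_eq_zero_of_eventuallyEq_zero (hf : f =ᶠ[𝓝 (t, x)] 0) (i : Fin 3) :
    spd i f t x = 0 :=
  ((hasFDerivAt_const 0 (t, x)).congr_of_eventuallyEq hf).spd_eq i

theorem spdiv_smul (hf : DifferentiableAt ℝ f (t, x)) (hv : DifferentiableAt ℝ v (t, x)) :
    spdiv (fun q => f q • v q) t x = f (t, x) * spdiv v t x + ∑ i, spd i f t x * v (t, x) i := by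
  rw [(hf.hasFDerivAt.fun_smul hv.hasFDerivAt).spdiv_eq, hv.hasFDerivAt.spdiv_eq, Finset.mul_sum,
    ← Finset.sum_add_distrib]
  simp [spd_eq_fderiv hf]

theorem spd_add (hf : DifferentiableAt ℝ f (t, x)) (hg : DifferentiableAt ℝ g (t, x)) (i : Fin 3) :
    spd i (fun q => f q + g q) t x = spd i f t x + spd i g t x := by
  rw [spd_eq_fderiv (hf.fun_add hg), spd_eq_fderiv hf, spd_eq_fderiv hg, fderiv_fun_add hf hg]
  rfl

theorem spd_mul (hf : DifferentiableAt ℝ f (t, x)) (hg : DifferentiableAt ℝ g (t, x)) (i : Fin 3) :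
    spd i (fun q => f q * g q) t x = f (t, x) * spd i g t x + g (t, x) * spd i f t x := by
  rw [spd_eq_fderiv (hf.fun_mul hg), spd_eq_fderiv hf, spd_eq_fderiv hg, fderiv_fun_mul hf hg]
  simp

theorem spd_sum {ι : Type*} {s : Finset ι} {F : ι → ℝ × V3 → ℝ}
    (hF : ∀ k ∈ s, DifferentiableAt ℝ (F k) (t, x)) (i : Fin 3) :
    spd i (fun q => ∑ k ∈ s, F k q) t x = ∑ k ∈ s, spd i (F k) t x := by
  rw [spd_eq_fderiv (DifferentiableAt.fun_sum hF), fderiv_fun_sum hF]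
  simp [Finset.sum_congr rfl fun k hk => spd_eq_fderiv (hF k hk) i]

end PartialDerivatives

theorem ContDiffAt.hasFDerivAt_fderiv_apply {E F : Type*} [NormedAddCommGroup E] [NormedSpace ℝ E]
    [NormedAddCommGroup F] [NormedSpace ℝ F] {f : E → F} {a : E} (hf : ContDiffAt ℝ 2 f a)
    (w : E) : HasFDerivAt (fun q => fderiv ℝ f q w) ((fderiv ℝ (fderiv ℝ f) a).flip w) a :=
  (((hf.fderiv_right one_add_one_eq_two.le).differentiableAt one_ne_zero).hasFDerivAt.clm_apply
    (hasFDerivAt_const w a)).congr_fderiv (by ext; simp)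

section SecondDerivatives

variable {f : ℝ × V3 → ℝ} {v : ℝ × V3 → V3} {t : ℝ} {x : V3}

theorem ContDiffAt.hasFDerivAt_spd (hf : ContDiffAt ℝ 2 f (t, x)) (i : Fin 3) :
    HasFDerivAt (fun q => spd i f q.1 q.2) ((fderiv ℝ (fderiv ℝ f) (t, x)).flip (spaceDir i))
      (t, x) := by
  refine (hf.hasFDerivAt_fderiv_apply _).congr_of_eventuallyEq ?_
  filter_upwards [hf.eventually (by simp)] with q hq
  exact spd_eq_fderiv (hq.differentiableAt two_ne_zero) i

theorem ContDiffAt.hasFDerivAt_pdt (hf : ContDiffAt ℝ 2 f (t, x)) :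
    HasFDerivAt (fun q => pdt f q.1 q.2) ((fderiv ℝ (fderiv ℝ f) (t, x)).flip timeDir) (t, x) := by
  refine (hf.hasFDerivAt_fderiv_apply _).congr_of_eventuallyEq ?_
  filter_upwards [hf.eventually (by simp)] with q hq
  exact (hq.differentiableAt two_ne_zero).hasFDerivAt.pdt_eq

theorem ContDiffAt.differentiableAt_spdiv (hv : ContDiffAt ℝ 2 v (t, x)) :
    DifferentiableAt ℝ (fun q => spdiv v q.1 q.2) (t, x) := by
  have hsum : DifferentiableAt ℝ (fun q => ∑ i, fderiv ℝ v q (spaceDir i) i) (t, x) :=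
    DifferentiableAt.fun_sum fun i _ =>
      (hasFDerivAt_pi'.1 (hv.hasFDerivAt_fderiv_apply (spaceDir i)) i).differentiableAt
  refine hsum.congr_of_eventuallyEq ?_
  filter_upwards [hv.eventually (by simp)] with q hq
  exact (hq.differentiableAt two_ne_zero).hasFDerivAt.spdiv_eq

theorem ContDiffAt.spd_spd_comm (hf : ContDiffAt ℝ 2 f (t, x)) (i j : Fin 3) :
    spd i (fun q => spd j f q.1 q.2) t x = spd j (fun q => spd i f q.1 q.2) t x := by
  rw [(hf.hasFDerivAt_spd j).spd_eq, (hf.hasFDerivAt_spd i).spd_eq]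
  exact hf.isSymmSndFDerivAt (by simp) _ _

theorem ContDiffAt.spd_pdt_comm (hf : ContDiffAt ℝ 2 f (t, x)) (i : Fin 3) :
    spd i (fun q => pdt f q.1 q.2) t x = pdt (fun q => spd i f q.1 q.2) t x := by
  rw [hf.hasFDerivAt_pdt.spd_eq, (hf.hasFDerivAt_spd i).pdt_eq]
  exact hf.isSymmSndFDerivAt (by simp) _ _

end SecondDerivatives

section Norm3

theorem norm3_pos {v : V3} (hv : v ≠ 0) : 0 < norm3 v := by
  obtain ⟨i, hi⟩ := Function.ne_iff.1 hv
  exact Real.sqrt_pos.2 <|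
    Finset.sum_pos' (fun j _ => sq_nonneg (v j)) ⟨i, Finset.mem_univ i, sq_pos_of_ne_zero hi⟩

theorem norm3_sq (v : V3) : norm3 v ^ 2 = ∑ i, v i ^ 2 :=
  Real.sq_sqrt (Finset.sum_nonneg fun i _ => sq_nonneg (v i))

theorem norm3_rpow_eq {v : V3} (hv : v ≠ 0) (p : ℝ) :
    norm3 v ^ p = norm3 v ^ (p - 2) * ∑ i, v i ^ 2 := by
  rw [← norm3_sq, ← Real.rpow_two, ← Real.rpow_add (norm3_pos hv), sub_add_cancel]

theorem HasFDerivAt.norm3_rpow {E : Type*} [NormedAddCommGroup E] [NormedSpace ℝ E] {G : E → V3}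
    {L : Fin 3 → E →L[ℝ] ℝ} {a : E} (hG : ∀ i, HasFDerivAt (fun q => G q i) (L i) a)
    (h0 : G a ≠ 0) (p : ℝ) :
    HasFDerivAt (fun q => norm3 (G q) ^ p) ((p * norm3 (G a) ^ (p - 2)) • ∑ i, G a i • L i) a := by
  have hN := norm3_pos h0
  have hS : HasFDerivAt (fun q => ∑ i, G q i ^ 2) (∑ i, (2 * G a i) • L i) a :=
    HasFDerivAt.fun_sum fun i _ => by simpa using (hG i).pow 2
  have hsqrt : HasFDerivAt (fun q => norm3 (G q))
      ((1 / (2 * norm3 (G a))) • ∑ i, (2 * G a i) • L i) a :=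
    (Real.hasDerivAt_sqrt (Real.sqrt_pos.1 hN).ne').comp_hasFDerivAt a hS
  refine ((Real.hasDerivAt_rpow_const (p := p) (Or.inl hN.ne')).comp_hasFDerivAt a
    hsqrt).congr_fderiv ?_
  have hexp : norm3 (G a) ^ (p - 1) = norm3 (G a) ^ (p - 2) * norm3 (G a) := by
    rw [← Real.rpow_add_one hN.ne']; ring_nf
  ext w
  simp only [smul_apply, FunLike.coe_sum, Finset.sum_apply, smul_eq_mul, hexp, Finset.mul_sum]
  refine Finset.sum_congr rfl fun i _ => ?_
  field_simp

end Norm3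

section Transport

variable {ρ : ℝ × V3 → ℝ} {u : ℝ × V3 → V3} {t : ℝ} {x : V3}

theorem ContDiffAt.hasFDerivAt_norm3_spgrad_rpow (hρ : ContDiffAt ℝ 2 ρ (t, x))
    (h0 : spgrad ρ t x ≠ 0) (p : ℝ) :
    HasFDerivAt (fun q => norm3 (spgrad ρ q.1 q.2) ^ p)
      ((p * norm3 (spgrad ρ t x) ^ (p - 2)) •
        ∑ i, spgrad ρ t x i • (fderiv ℝ (fderiv ℝ ρ) (t, x)).flip (spaceDir i)) (t, x) :=
  HasFDerivAt.norm3_rpow (G := fun q : ℝ × V3 => spgrad ρ q.1 q.2) hρ.hasFDerivAt_spd h0 p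

theorem ContDiffAt.pdt_norm3_spgrad_rpow (hρ : ContDiffAt ℝ 2 ρ (t, x))
    (h0 : spgrad ρ t x ≠ 0) (p : ℝ) :
    pdt (fun q => norm3 (spgrad ρ q.1 q.2) ^ p) t x =
      p * norm3 (spgrad ρ t x) ^ (p - 2) *
        ∑ i, spgrad ρ t x i * pdt (fun q => spd i ρ q.1 q.2) t x := by
  simp [(hρ.hasFDerivAt_norm3_spgrad_rpow h0 p).pdt_eq, (hρ.hasFDerivAt_spd _).pdt_eq]

theorem ContDiffAt.spd_norm3_spgrad_rpow (hρ : ContDiffAt ℝ 2 ρ (t, x))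
    (h0 : spgrad ρ t x ≠ 0) (p : ℝ) (j : Fin 3) :
    spd j (fun q => norm3 (spgrad ρ q.1 q.2) ^ p) t x =
      p * norm3 (spgrad ρ t x) ^ (p - 2) *
        ∑ i, spgrad ρ t x i * spd j (fun q => spd i ρ q.1 q.2) t x := by
  simp [(hρ.hasFDerivAt_norm3_spgrad_rpow h0 p).spd_eq, (hρ.hasFDerivAt_spd _).spd_eq]

theorem spd_continuity_equation (hρ : ContDiffAt ℝ 2 ρ (t, x)) (hu : ContDiffAt ℝ 2 u (t, x))
    (hcont : ∀ᶠ q in 𝓝 (t, x), pdt ρ q.1 q.2 + spdiv (fun q => ρ q • u q) q.1 q.2 = 0)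
    (i : Fin 3) :
    pdt (fun q => spd i ρ q.1 q.2) t x + spd i ρ t x * spdiv u t x
      + ρ (t, x) * spd i (fun q => spdiv u q.1 q.2) t x
      + ∑ j, (spd j ρ t x * spdv i u t x j + u (t, x) j * spd j (fun q => spd i ρ q.1 q.2) t x)
      = 0 := by
  have hexpanded : (fun q => pdt ρ q.1 q.2 + (ρ q * spdiv u q.1 q.2 + ∑ j, spd j ρ q.1 q.2 * u q j))
      =ᶠ[𝓝 (t, x)] 0 := by
    filter_upwards [hcont, hρ.eventually (by simp), hu.eventually (by simp)] with q hq hρq huq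
    rwa [spdiv_smul (hρq.differentiableAt two_ne_zero) (huq.differentiableAt two_ne_zero)] at hq
  have hρd := hρ.differentiableAt two_ne_zero
  have hud := differentiableAt_pi.1 (hu.differentiableAt two_ne_zero)
  have hspd (j : Fin 3) := (hρ.hasFDerivAt_spd j).differentiableAt
  have hρdiv := hρd.fun_mul hu.differentiableAt_spdiv
  have hflux := DifferentiableAt.fun_sum (u := Finset.univ) fun j _ => (hspd j).fun_mul (hud j)
  have h := spd_eq_zero_of_eventuallyEq_zero hexpanded i
  rw [spd_add hρ.hasFDerivAt_pdt.differentiableAt (hρdiv.fun_add hflux), spd_add hρdiv hflux,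
    spd_mul hρd hu.differentiableAt_spdiv, spd_sum fun j _ => (hspd j).fun_mul (hud j)] at h
  simp only [spd_mul (hspd _) (hud _), spd_apply_eq_spdv (hu.differentiableAt two_ne_zero),
    hρ.spd_pdt_comm, hρ.spd_spd_comm i] at h
  linear_combination h

end Transport

theorem grad_density_transport_equation_general
    (U : Set (ℝ × V3)) (hU : IsOpen U)
    (ρ : ℝ × V3 → ℝ) (u : ℝ × V3 → V3)
    (hρ : ContDiffOn ℝ 2 ρ U) (hu : ContDiffOn ℝ 2 u U)
    -- continuity equation `∂ₜρ + div (ρ u) = 0` on `U`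
    (hcont : ∀ p ∈ U, pdt ρ p.1 p.2 + spdiv (fun q => ρ q • u q) p.1 p.2 = 0)
    (p : ℝ)
    (t : ℝ) (x : V3) (hmem : (t, x) ∈ U)
    (hgrad : spgrad ρ t x ≠ 0) :
    pdt (fun q => norm3 (spgrad ρ q.1 q.2) ^ p) t x
      + spdiv (fun q => (norm3 (spgrad ρ q.1 q.2) ^ p) • u q) t x
      + (p - 1) * norm3 (spgrad ρ t x) ^ p * spdiv u t x
      + p * norm3 (spgrad ρ t x) ^ (p - 2)
          * (∑ i, ∑ j, spgrad ρ t x i * spdv i u t x j * spgrad ρ t x j)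
      + p * ρ (t, x) * norm3 (spgrad ρ t x) ^ (p - 2)
          * (∑ i, spgrad ρ t x i * spd i (fun q => spdiv u q.1 q.2) t x) = 0 := by
  have hnhds : U ∈ 𝓝 (t, x) := hU.mem_nhds hmem
  replace hρ := hρ.contDiffAt hnhds
  replace hu := hu.contDiffAt hnhds
  have htransport := spd_continuity_equation hρ hu (Filter.mem_of_superset hnhds hcont)
  have hnorm := norm3_rpow_eq hgrad p
  rw [spdiv_smul (hρ.hasFDerivAt_norm3_spgrad_rpow hgrad p).differentiableAt
      (hu.differentiableAt two_ne_zero), hρ.pdt_norm3_spgrad_rpow hgrad]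
  simp only [hρ.spd_norm3_spgrad_rpow hgrad]
  have h0 := htransport 0
  have h1 := htransport 1
  have h2 := htransport 2
  simp only [spdiv, spgrad, Fin.sum_univ_three] at h0 h1 h2 hnorm ⊢
  linear_combination (p * norm3 (spgrad ρ t x) ^ (p - 2)) *
      (spd 0 ρ t x * h0 + spd 1 ρ t x * h1 + spd 2 ρ t x * h2)
    + p * (spdv 0 u t x 0 + spdv 1 u t x 1 + spdv 2 u t x 2) * hnorm

/-- The transport equation satisfied by `|∇ρ|^p` when `ρ, u` satisfy the continuity
equation: at any point where `∇ρ ≠ 0`,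
`∂ₜ(|∇ρ|^p) + div (|∇ρ|^p u) + (p−1)|∇ρ|^p div u
  + p |∇ρ|^{p−2} (∇ρ)* ∇u (∇ρ) + p ρ |∇ρ|^{p−2} ⟨∇ρ, ∇(div u)⟩ = 0`. -/
theorem grad_density_transport_equation
    (U : Set (ℝ × V3)) (hU : IsOpen U)
    (ρ : ℝ × V3 → ℝ) (u : ℝ × V3 → V3)
    (hρ : ContDiffOn ℝ 2 ρ U) (hu : ContDiffOn ℝ 2 u U)
    -- continuity equation `∂ₜρ + div (ρ u) = 0` on `U`
    (hcont : ∀ p ∈ U, pdt ρ p.1 p.2 + spdiv (fun q => ρ q • u q) p.1 p.2 = 0)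
    (p : ℝ) (hp2 : 2 ≤ p) (hp6 : p ≤ 6)
    (t : ℝ) (x : V3) (hmem : (t, x) ∈ U)
    (hgrad : spgrad ρ t x ≠ 0) :
    pdt (fun q => norm3 (spgrad ρ q.1 q.2) ^ p) t x
      + spdiv (fun q => (norm3 (spgrad ρ q.1 q.2) ^ p) • u q) t x
      + (p - 1) * norm3 (spgrad ρ t x) ^ p * spdiv u t x
      + p * norm3 (spgrad ρ t x) ^ (p - 2)
          * (∑ i, ∑ j, spgrad ρ t x i * spdv i u t x j * spgrad ρ t x j)
      + p * ρ (t, x) * norm3 (spgrad ρ t x) ^ (p - 2)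
          * (∑ i, spgrad ρ t x i * spd i (fun q => spdiv u q.1 q.2) t x) = 0 :=
  grad_density_transport_equation_general U hU ρ u hρ hu hcont p t x hmem hgrad

end
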